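/- Fix c > 0. The function δ_c(x) = B_c(x) - R_c(x) is symmetric about c/2, i.e., δ_c(c-x) = δ_c(x) for x ∈ (0,c), strictly increasing on (0, c/2) and strictly decreasing on (c/2, c). -/

import Mathlib

noncomputable def digamma (x : ℝ) : ℝ := deriv (fun y : ℝ => Real.log (Real.Gamma y)) x

noncomputable def Bc (c x : ℝ) : ℝ := Real.Gamma x * Real.Gamma (c - x) / Real.Gamma c

noncomputable def Rc (c x : ℝ) : ℝ :=
  -digamma x - digamma (c - x) - 2 * Real.eulerMascheroniConstant

/-!
Since `ψ(x + 1) = ψ(x) + 1/x`, we can write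
`δ_c(x) = ψ(x + 1) + ψ(c - x + 1) + 2γ - φ(x)` with `φ(x) = 1/x + 1/(c - x) - B_c(x)`.

The first part is nondecreasing on `(0, c/2]`. The recurrence together with
`ψ(a + h + n) - ψ(a + n) → 0` gives `ψ(a + h) - ψ(a) = ∑ₙ (1/(a + n) - 1/(a + h + n))`,
which is antitone in `a`; for `x < y ≤ c/2` apply it with `h = y - x` at `x + 1 ≤ c - y + 1`.

The second part is strictly decreasing. Substituting the logistic function `t = σ(u)` in the
Beta integral and folding `ℝ` onto `(0, ∞)` gives
`B_c(x) = ∫₀^∞ (e^{-xu} + e^{-(c-x)u}) σ(u)^c du`, hence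
`φ(x) = ∫₀^∞ (e^{-xu} + e^{-(c-x)u}) (1 - σ(u)^c) du`, and for every `u > 0` the factor
`e^{-xu} + e^{-(c-x)u}` strictly decreases in `x ∈ (0, c/2]`.

Both `B_c` and `R_c` are visibly symmetric under `x ↦ c - x`, which transports monotonicity
from `(0, c/2)` to `(c/2, c)`.
-/

open Real Set Filter Topology MeasureTheory

lemma differentiableAt_log_Gamma {x : ℝ} (hx : 0 < x) :
    DifferentiableAt ℝ (fun y => log (Gamma y)) x :=
  (differentiableAt_Gamma fun m => by linarith [(m.cast_nonneg : (0 : ℝ) ≤ m)]).log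
    (Gamma_pos_of_pos hx).ne'

lemma digamma_add_one {x : ℝ} (hx : 0 < x) : digamma (x + 1) = digamma x + x⁻¹ := by
  unfold digamma
  rw [← deriv_comp_add_const _ 1, ← deriv_log,
    ← deriv_add (differentiableAt_log_Gamma hx) (differentiableAt_log hx.ne')]
  refine EventuallyEq.deriv_eq ?_
  filter_upwards [eventually_gt_nhds hx] with t ht
  rw [Pi.add_apply, Gamma_add_one ht.ne', log_mul ht.ne' (Gamma_pos_of_pos ht).ne', add_comm]

lemma digamma_add_nat {a : ℝ} (ha : 0 < a) (n : ℕ) :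
    digamma (a + n) = digamma a + ∑ k ∈ Finset.range n, (a + k)⁻¹ := by
  induction n with
  | zero => simp
  | succ n ih =>
    rw [Nat.cast_succ, ← add_assoc, digamma_add_one (by positivity), ih, Finset.sum_range_succ,
      add_assoc]

lemma monotoneOn_digamma : MonotoneOn digamma (Ioi 0) :=
  convexOn_log_Gamma.monotoneOn_deriv fun _ hx => differentiableAt_log_Gamma hx

lemma digamma_le_digamma {a b : ℝ} (ha : 0 < a) (hab : a ≤ b) : digamma a ≤ digamma b :=
  monotoneOn_digamma ha (ha.trans_le hab) hab

lemma tendsto_digamma_add_add_nat_sub {a h : ℝ} (ha : 0 < a) (hh : 0 ≤ h) :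
    Tendsto (fun n : ℕ => digamma (a + h + n) - digamma (a + n)) atTop (𝓝 0) := by
  set m := ⌈h⌉₊
  have hm : h ≤ m := Nat.le_ceil h
  refine squeeze_zero (fun n => sub_nonneg.2 ?_) (fun n => ?_)
    (by simpa using (tendsto_inv_atTop_zero.comp
      (tendsto_atTop_add_const_left _ a tendsto_natCast_atTop_atTop)).const_mul (m : ℝ))
  · exact digamma_le_digamma (by positivity) (by linarith)
  · have han : 0 < a + n := by positivity
    calc digamma (a + h + n) - digamma (a + n)
        ≤ digamma (a + n + m) - digamma (a + n) := by
          gcongr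
          exact digamma_le_digamma (by positivity) (by linarith)
      _ = ∑ k ∈ Finset.range m, (a + n + k)⁻¹ := by rw [digamma_add_nat han]; ring
      _ ≤ ∑ k ∈ Finset.range m, (a + n)⁻¹ :=
          Finset.sum_le_sum fun k _ => inv_anti₀ han (le_add_of_nonneg_right k.cast_nonneg)
      _ = m * (a + n)⁻¹ := by simp

lemma inv_sub_inv_add_le_of_le {s t h : ℝ} (hs : 0 < s) (hst : s ≤ t) (hh : 0 ≤ h) :
    t⁻¹ - (t + h)⁻¹ ≤ s⁻¹ - (s + h)⁻¹ := by
  have ht : 0 < t := hs.trans_le hst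
  rw [inv_sub_inv ht.ne' (by positivity), inv_sub_inv hs.ne' (by positivity),
    add_sub_cancel_left, add_sub_cancel_left]
  gcongr

lemma antitoneOn_digamma_add_sub_digamma {h : ℝ} (hh : 0 ≤ h) :
    AntitoneOn (fun a => digamma (a + h) - digamma a) (Ioi 0) := by
  intro a (ha : 0 < a) b (hb : 0 < b) hab
  -- `ψ(a + h) - ψ(a) = ψ(a + h + n) - ψ(a + n) + ∑_{k<n} ((a + k)⁻¹ - (a + h + k)⁻¹)`,
  -- and the summands are antitone in `a`.
  have key (n : ℕ) :
      digamma (a + h + n) - digamma (a + n) - (digamma (b + h + n) - digamma (b + n))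
        ≤ digamma (a + h) - digamma a - (digamma (b + h) - digamma b) := by
    have hsum : 0 ≤ ∑ k ∈ Finset.range n,
        ((a + k)⁻¹ - (a + h + k)⁻¹ - ((b + k)⁻¹ - (b + h + k)⁻¹)) :=
      Finset.sum_nonneg fun k _ => sub_nonneg.2 <| by
        simpa [add_right_comm _ h] using
          inv_sub_inv_add_le_of_le (s := a + k) (t := b + k) (by positivity) (by linarith) hh
    simp only [Finset.sum_sub_distrib] at hsum
    rw [digamma_add_nat (ha.trans_le (le_add_of_nonneg_right hh)) n, digamma_add_nat ha n,
      digamma_add_nat (hb.trans_le (le_add_of_nonneg_right hh)) n, digamma_add_nat hb n]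
    linarith
  have := le_of_tendsto' (((tendsto_digamma_add_add_nat_sub ha hh).sub
    (tendsto_digamma_add_add_nat_sub hb hh))) key
  simp only [sub_zero] at this
  linarith

lemma integral_Ioo_rpow_mul_one_sub_rpow {a b : ℝ} (ha : 0 < a) (hb : 0 < b) :
    ∫ t in Ioo (0 : ℝ) 1, t ^ (a - 1) * (1 - t) ^ (b - 1)
      = Gamma a * Gamma b / Gamma (a + b) := by
  have hbeta := Complex.Gamma_mul_Gamma_eq_betaIntegral (s := a) (t := b)
    (by simpa using ha) (by simpa using hb)
  have hreal : Complex.betaIntegral a b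
      = ((∫ t in (0 : ℝ)..1, t ^ (a - 1) * (1 - t) ^ (b - 1) : ℝ) : ℂ) := by
    rw [Complex.betaIntegral, ← intervalIntegral.integral_ofReal]
    refine intervalIntegral.integral_congr fun t ht => ?_
    rw [uIcc_of_le zero_le_one] at ht
    rw [Complex.ofReal_mul, Complex.ofReal_cpow ht.1, Complex.ofReal_cpow (sub_nonneg.2 ht.2)]
    push_cast
    rfl
  rw [hreal, ← Complex.ofReal_add, Complex.Gamma_ofReal, Complex.Gamma_ofReal,
    Complex.Gamma_ofReal, ← Complex.ofReal_mul, ← Complex.ofReal_mul, Complex.ofReal_inj,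
    intervalIntegral.integral_of_le zero_le_one, integral_Ioc_eq_integral_Ioo] at hbeta
  rw [hbeta, mul_div_cancel_left₀ _ (Gamma_pos_of_pos (add_pos ha hb)).ne']

lemma integrableOn_Ioo_rpow_mul_one_sub_rpow {a b : ℝ} (ha : 0 < a) (hb : 0 < b) :
    IntegrableOn (fun t : ℝ => t ^ (a - 1) * (1 - t) ^ (b - 1)) (Ioo 0 1) := by
  have h := (Complex.betaIntegral_convergent (u := a) (v := b)
    (by simpa using ha) (by simpa using hb)).norm
  rw [intervalIntegrable_iff_integrableOn_Ioc_of_le zero_le_one] at h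
  refine (h.mono_set Ioo_subset_Ioc_self).congr_fun (fun t ht => ?_) measurableSet_Ioo
  dsimp only
  rw [norm_mul, show (1 : ℂ) - t = ((1 - t : ℝ) : ℂ) by push_cast; rfl,
    Complex.norm_cpow_eq_rpow_re_of_pos ht.1, Complex.norm_cpow_eq_rpow_re_of_pos (sub_pos.2 ht.2)]
  simp

lemma abs_deriv_sigmoid_smul_rpow_mul_one_sub_rpow (a b u : ℝ) :
    |sigmoid u * (1 - sigmoid u)| • (sigmoid u ^ (a - 1) * (1 - sigmoid u) ^ (b - 1))
      = sigmoid u ^ a * sigmoid (-u) ^ b := by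
  have h0 := sigmoid_pos u
  have h1 : 0 < 1 - sigmoid u := sub_pos.2 (sigmoid_lt_one u)
  rw [sigmoid_neg, abs_of_pos (mul_pos h0 h1), smul_eq_mul, rpow_sub_one h0.ne',
    rpow_sub_one h1.ne']
  field_simp

lemma integrable_sigmoid_rpow_mul_sigmoid_neg_rpow {a b : ℝ} (ha : 0 < a) (hb : 0 < b) :
    Integrable fun u => sigmoid u ^ a * sigmoid (-u) ^ b := by
  have h := integrableOn_image_iff_integrableOn_abs_deriv_smul MeasurableSet.univ
    (fun u _ => (hasDerivAt_sigmoid u).hasDerivWithinAt) sigmoid_injective.injOn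
    (fun t => t ^ (a - 1) * (1 - t) ^ (b - 1))
  rw [image_univ, range_sigmoid, integrableOn_univ] at h
  simpa only [abs_deriv_sigmoid_smul_rpow_mul_one_sub_rpow] using
    h.1 (integrableOn_Ioo_rpow_mul_one_sub_rpow ha hb)

lemma integral_sigmoid_rpow_mul_sigmoid_neg_rpow {a b : ℝ} (ha : 0 < a) (hb : 0 < b) :
    ∫ u, sigmoid u ^ a * sigmoid (-u) ^ b = Gamma a * Gamma b / Gamma (a + b) := by
  have h := integral_image_eq_integral_abs_deriv_smul MeasurableSet.univ
    (fun u _ => (hasDerivAt_sigmoid u).hasDerivWithinAt) sigmoid_injective.injOn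
    (fun t => t ^ (a - 1) * (1 - t) ^ (b - 1))
  rw [image_univ, range_sigmoid, setIntegral_univ, integral_Ioo_rpow_mul_one_sub_rpow ha hb] at h
  simpa only [abs_deriv_sigmoid_smul_rpow_mul_one_sub_rpow] using h.symm

lemma integral_eq_integral_Ioi_add_comp_neg {E : Type*} [NormedAddCommGroup E] [NormedSpace ℝ E]
    {f : ℝ → E} (hf : Integrable f) : ∫ u, f u = ∫ u in Ioi 0, (f u + f (-u)) := by
  rw [← intervalIntegral.integral_Iic_add_Ioi hf.integrableOn hf.integrableOn,
    integral_add hf.integrableOn hf.comp_neg.integrableOn, ← integral_comp_neg_Ioi, neg_zero,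
    add_comm]

lemma sigmoid_neg_rpow (u b : ℝ) : sigmoid (-u) ^ b = sigmoid u ^ b * exp (-b * u) := by
  rw [← sigmoid_mul_rexp_neg, mul_rpow (sigmoid_nonneg u) (exp_pos _).le, ← exp_mul]
  ring_nf

lemma sigmoid_rpow_mul_sigmoid_neg_rpow_add_comp_neg (c x u : ℝ) :
    sigmoid u ^ x * sigmoid (-u) ^ (c - x) + sigmoid (-u) ^ x * sigmoid (- -u) ^ (c - x)
      = (exp (-x * u) + exp (-(c - x) * u)) * sigmoid u ^ c := by
  rw [neg_neg, sigmoid_neg_rpow, sigmoid_neg_rpow]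
  calc _ = (sigmoid u ^ x * sigmoid u ^ (c - x)) * (exp (-x * u) + exp (-(c - x) * u)) := by ring
    _ = _ := by rw [← rpow_add (sigmoid_pos u), add_sub_cancel, mul_comm]

lemma integrableOn_exp_add_exp_mul_sigmoid_rpow {c x : ℝ} (hx : 0 < x) (hxc : x < c) :
    IntegrableOn (fun u => (exp (-x * u) + exp (-(c - x) * u)) * sigmoid u ^ c) (Ioi 0) := by
  have hf := integrable_sigmoid_rpow_mul_sigmoid_neg_rpow hx (sub_pos.2 hxc)
  exact (hf.integrableOn.add hf.comp_neg.integrableOn).congr_fun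
    (fun u _ => sigmoid_rpow_mul_sigmoid_neg_rpow_add_comp_neg c x u) measurableSet_Ioi

lemma Bc_eq_integral_Ioi {c x : ℝ} (hx : 0 < x) (hxc : x < c) :
    Bc c x = ∫ u in Ioi 0, (exp (-x * u) + exp (-(c - x) * u)) * sigmoid u ^ c := by
  have hf := integrable_sigmoid_rpow_mul_sigmoid_neg_rpow hx (sub_pos.2 hxc)
  calc Bc c x = Gamma x * Gamma (c - x) / Gamma (x + (c - x)) := by rw [Bc, add_sub_cancel]
    _ = ∫ u, sigmoid u ^ x * sigmoid (-u) ^ (c - x) :=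
      (integral_sigmoid_rpow_mul_sigmoid_neg_rpow hx (sub_pos.2 hxc)).symm
    _ = _ := by
      simp only [integral_eq_integral_Ioi_add_comp_neg hf,
        sigmoid_rpow_mul_sigmoid_neg_rpow_add_comp_neg]

lemma integral_Ioi_exp_neg_mul {x : ℝ} (hx : 0 < x) : ∫ u in Ioi 0, exp (-x * u) = x⁻¹ := by
  rw [integral_exp_mul_Ioi (neg_lt_zero.2 hx), mul_zero, exp_zero, neg_div_neg_eq, one_div]

lemma integrableOn_exp_add_exp_mul_one_sub_sigmoid_rpow {c x : ℝ} (hx : 0 < x) (hxc : x < c) :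
    IntegrableOn (fun u => (exp (-x * u) + exp (-(c - x) * u)) * (1 - sigmoid u ^ c)) (Ioi 0) := by
  simp_rw [mul_one_sub]
  exact ((integrableOn_exp_mul_Ioi (neg_lt_zero.2 hx) 0).add
    (integrableOn_exp_mul_Ioi (neg_lt_zero.2 (sub_pos.2 hxc)) 0)).sub
    (integrableOn_exp_add_exp_mul_sigmoid_rpow hx hxc)

lemma inv_add_inv_sub_Bc_eq_integral {c x : ℝ} (hx : 0 < x) (hxc : x < c) :
    x⁻¹ + (c - x)⁻¹ - Bc c x
      = ∫ u in Ioi 0, (exp (-x * u) + exp (-(c - x) * u)) * (1 - sigmoid u ^ c) := by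
  have hcx : 0 < c - x := sub_pos.2 hxc
  have hx_int := integrableOn_exp_mul_Ioi (neg_lt_zero.2 hx) 0
  have hcx_int := integrableOn_exp_mul_Ioi (neg_lt_zero.2 hcx) 0
  simp_rw [mul_one_sub]
  rw [integral_sub (f := fun u => exp (-x * u) + exp (-(c - x) * u)) (hx_int.add hcx_int)
      (integrableOn_exp_add_exp_mul_sigmoid_rpow hx hxc),
    integral_add hx_int hcx_int, integral_Ioi_exp_neg_mul hx, integral_Ioi_exp_neg_mul hcx,
    Bc_eq_integral_Ioi hx hxc]

lemma exp_neg_mul_add_exp_neg_mul_lt {c x y u : ℝ} (hu : 0 < u) (hxy : x < y)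
    (hxyc : x + y < c) :
    exp (-y * u) + exp (-(c - y) * u) < exp (-x * u) + exp (-(c - x) * u) := by
  have h1 : exp (-y * u) < exp (-x * u) := exp_lt_exp.2 (by nlinarith)
  have h2 : exp (-(c - x - y) * u) < 1 := exp_lt_one_iff.2 (by nlinarith)
  have hcx : exp (-(c - x) * u) = exp (-(c - x - y) * u) * exp (-y * u) := by
    rw [← exp_add]; ring_nf
  have hcy : exp (-(c - y) * u) = exp (-(c - x - y) * u) * exp (-x * u) := by
    rw [← exp_add]; ring_nf
  rw [← sub_pos, hcx, hcy]
  calc 0 < (exp (-x * u) - exp (-y * u)) * (1 - exp (-(c - x - y) * u)) :=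
        mul_pos (sub_pos.2 h1) (sub_pos.2 h2)
    _ = _ := by ring

lemma setIntegral_Ioi_pos {f : ℝ → ℝ} {a : ℝ} (hf : IntegrableOn f (Ioi a))
    (hpos : ∀ u ∈ Ioi a, 0 < f u) : 0 < ∫ u in Ioi a, f u := by
  rw [setIntegral_pos_iff_support_of_nonneg_ae
    (ae_restrict_of_forall_mem measurableSet_Ioi fun u hu => (hpos u hu).le) hf,
    show Function.support f ∩ Ioi a = Ioi a from inter_eq_right.2 fun u hu => (hpos u hu).ne',
    volume_Ioi]
  exact ENNReal.zero_lt_top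

lemma strictAntiOn_inv_add_inv_sub_Bc {c : ℝ} (hc : 0 < c) :
    StrictAntiOn (fun x => x⁻¹ + (c - x)⁻¹ - Bc c x) (Ioc 0 (c / 2)) := by
  intro x ⟨hx, hxc⟩ y ⟨hy, hyc⟩ hxy
  have hx' : x < c := by linarith
  have hy' : y < c := by linarith
  dsimp only
  rw [← sub_pos, inv_add_inv_sub_Bc_eq_integral hx hx', inv_add_inv_sub_Bc_eq_integral hy hy',
    ← integral_sub (integrableOn_exp_add_exp_mul_one_sub_sigmoid_rpow hx hx')
      (integrableOn_exp_add_exp_mul_one_sub_sigmoid_rpow hy hy')]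
  refine setIntegral_Ioi_pos ((integrableOn_exp_add_exp_mul_one_sub_sigmoid_rpow hx hx').sub
    (integrableOn_exp_add_exp_mul_one_sub_sigmoid_rpow hy hy')) fun u (hu : 0 < u) => ?_
  rw [← sub_mul]
  exact mul_pos (sub_pos.2 (exp_neg_mul_add_exp_neg_mul_lt hu hxy (by linarith)))
    (sub_pos.2 (rpow_lt_one (sigmoid_nonneg u) (sigmoid_lt_one u) hc))

lemma Bc_symm (c x : ℝ) : Bc c (c - x) = Bc c x := by
  rw [Bc, Bc, sub_sub_cancel, mul_comm]

lemma Rc_symm (c x : ℝ) : Rc c (c - x) = Rc c x := by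
  rw [Rc, Rc, sub_sub_cancel]
  ring

lemma Bc_sub_Rc_eq {c x : ℝ} (hx : 0 < x) (hxc : x < c) :
    Bc c x - Rc c x = digamma (x + 1) + digamma (c - x + 1) + 2 * eulerMascheroniConstant
      - (x⁻¹ + (c - x)⁻¹ - Bc c x) := by
  rw [Rc, digamma_add_one hx, digamma_add_one (sub_pos.2 hxc)]
  ring

lemma monotoneOn_digamma_add_one_add_digamma_sub_add_one (c : ℝ) :
    MonotoneOn (fun x => digamma (x + 1) + digamma (c - x + 1)) (Ioc 0 (c / 2)) := by
  intro x ⟨hx, _⟩ y ⟨_, hyc⟩ hxy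
  have h := antitoneOn_digamma_add_sub_digamma (sub_nonneg.2 hxy)
    (show 0 < x + 1 by linarith) (show 0 < c - y + 1 by linarith) (by linarith)
  dsimp only at h
  rw [show c - y + 1 + (y - x) = c - x + 1 by ring, show x + 1 + (y - x) = y + 1 by ring] at h
  dsimp only
  linarith

lemma strictMonoOn_Bc_sub_Rc {c : ℝ} (hc : 0 < c) :
    StrictMonoOn (fun x => Bc c x - Rc c x) (Ioc 0 (c / 2)) := by
  intro x hx y hy hxy
  dsimp only
  rw [Bc_sub_Rc_eq hx.1 (by linarith [hx.2]), Bc_sub_Rc_eq hy.1 (by linarith [hy.2])]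
  linarith [monotoneOn_digamma_add_one_add_digamma_sub_add_one c hx hy hxy.le,
    strictAntiOn_inv_add_inv_sub_Bc hc hx hy hxy]

theorem stmt_11 (c : ℝ) (hc : 0 < c) :
    (∀ x ∈ Set.Ioo 0 c, Bc c (c - x) - Rc c (c - x) = Bc c x - Rc c x) ∧
      StrictMonoOn (fun x => Bc c x - Rc c x) (Set.Ioo 0 (c / 2)) ∧
      StrictAntiOn (fun x => Bc c x - Rc c x) (Set.Ioo (c / 2) c) := by
  have hsymm (x : ℝ) : Bc c (c - x) - Rc c (c - x) = Bc c x - Rc c x := by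
    rw [Bc_symm, Rc_symm]
  have hmono := (strictMonoOn_Bc_sub_Rc hc).mono Ioo_subset_Ioc_self
  refine ⟨fun x _ => hsymm x, hmono, fun x ⟨_, hxc⟩ y ⟨hy, hyc⟩ hxy => ?_⟩
  simpa only [hsymm] using
    hmono ⟨sub_pos.2 hyc, by linarith⟩ ⟨by linarith, by linarith⟩ (sub_lt_sub_left hxy c)
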